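/- There exists an analytic function Υ₂ : ℝ² → ℝ such that (1) Υ₂(x) = I₂(x) for every x ∈ ℕ², where I₂(x₁,x₂) = ((x₁+x₂)² + 3x₁ + x₂)/2, and (2) for every x ∈ ℝ² and y ∈ ℕ² with ‖x - y‖∞ ≤ 1/5, one has |Υ₂(x) - I₂(y)| ≤ ‖x - y‖∞ ≤ 1/5. -/

import Mathlib

noncomputable def I2 (x : Fin 2 → ℝ) : ℝ := ((x 0 + x 1) ^ 2 + 3 * x 0 + x 1) / 2

lemma my_analyticAt_arcsin {w : ℝ} (hw : |w| < 1) : AnalyticAt ℝ Real.arcsin w := by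
  set F : ℂ → ℂ := fun z => -Complex.I * Complex.log (Complex.I * z + (1 - z ^ 2) ^ (1/2 : ℂ)) with hF
  have hsq : ∀ t : ℝ, |t| < 1 → (1 - (t:ℂ) ^ 2) ^ (1/2 : ℂ) = ((Real.sqrt (1 - t^2) : ℝ) : ℂ) := by
    intro t ht
    have h1 : (0:ℝ) ≤ 1 - t^2 := by nlinarith [abs_nonneg t, sq_abs t, ht.le]
    rw [show (1 - (t:ℂ)^2) = (((1 - t^2 : ℝ)):ℂ) by push_cast; ring,
      show ((1:ℂ)/2) = ((1/2 : ℝ) : ℂ) by norm_num,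
      ← Complex.ofReal_cpow h1, Real.sqrt_eq_rpow]
  -- F is complex-analytic at points ↑t with |t| < 1
  have hFa : ∀ t : ℝ, |t| < 1 → AnalyticAt ℂ F (t : ℂ) := by
    intro t ht
    have h1 : (0:ℝ) < 1 - t^2 := by nlinarith [abs_nonneg t, sq_abs t]
    apply AnalyticAt.mul analyticAt_const
    apply AnalyticAt.clog
    · apply AnalyticAt.add
      · exact analyticAt_const.mul (analyticAt_id)
      · apply AnalyticAt.cpow (analyticAt_const.sub (analyticAt_id.pow 2)) analyticAt_const
        show (1 : ℂ) - (t:ℂ)^2 ∈ Complex.slitPlane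
        rw [show (1 - (t:ℂ)^2) = (((1 - t^2 : ℝ)):ℂ) by push_cast; ring]
        exact Or.inl (by rw [Complex.ofReal_re]; exact h1)
    · show Complex.I * (t:ℂ) + (1 - (t:ℂ)^2) ^ (1/2 : ℂ) ∈ Complex.slitPlane
      rw [hsq t ht]
      refine Or.inl ?_
      have hre : (Complex.I * (t:ℂ) + ((Real.sqrt (1 - t^2) : ℝ):ℂ)).re = Real.sqrt (1 - t^2) := by
        simp
      rw [hre]
      exact Real.sqrt_pos.mpr h1
  -- the real restriction
  have hra : AnalyticAt ℝ (fun t : ℝ => (F t).re) w :=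
    (Complex.reCLM.analyticAt _).comp
      (((hFa w hw).restrictScalars).comp (Complex.ofRealCLM.analyticAt _))
  apply hra.congr
  have : Set.Ioo (-1 : ℝ) 1 ∈ nhds w := by
    apply Ioo_mem_nhds <;> [linarith [neg_abs_le w]; linarith [le_abs_self w]]
  filter_upwards [this] with t ht
  obtain ⟨ht1, ht2⟩ := ht
  have hta : |t| < 1 := abs_lt.mpr ⟨ht1, ht2⟩
  set a := Real.arcsin t with ha
  have hsin : Real.sin a = t := Real.sin_arcsin ht1.le ht2.le
  have hcos : Real.cos a = Real.sqrt (1 - t^2) := by rw [ha, Real.cos_arcsin]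
  have hexp : Complex.I * t + (1 - (t:ℂ)^2) ^ (1/2:ℂ) = Complex.exp (a * Complex.I) := by
    rw [hsq t hta, Complex.exp_mul_I, ← hcos, ← hsin]
    push_cast [Complex.ofReal_cos, Complex.ofReal_sin]
    ring
  have hlog : Complex.log (Complex.exp ((a:ℂ) * Complex.I)) = (a:ℂ) * Complex.I := by
    apply Complex.log_exp <;> simp [Complex.mul_I_im]
    · linarith [Real.neg_pi_div_two_le_arcsin t, Real.pi_pos]
    · linarith [Real.arcsin_le_pi_div_two t, Real.pi_pos]
  show (F t).re = Real.arcsin t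
  rw [hF]; simp only []
  rw [hexp, hlog]
  simp [Complex.mul_re, Complex.mul_im]
  exact ha

lemma my_analyticAt_sin (x : ℝ) : AnalyticAt ℝ Real.sin x := by
  have hc : AnalyticAt ℂ Complex.sin (x : ℂ) := by
    exact Complex.differentiable_sin.analyticAt _
  have : AnalyticAt ℝ (fun t : ℝ => (Complex.sin t).re) x :=
    (Complex.reCLM.analyticAt _).comp ((hc.restrictScalars).comp (Complex.ofRealCLM.analyticAt _))
  exact this.congr (Filter.Eventually.of_forall fun t => Complex.sin_ofReal_re t)

open Real in
lemma psi_contract {θ c : ℝ} (hθ : |θ| ≤ 1/5) (hc0 : 0 ≤ c) (hc1 : c ≤ 1) :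
    |θ - Real.arcsin (Real.sin (2*π*θ) * c) / (2*π)| ≤ 5 * (1-c) * |θ| := by
  have pi_gt : (3.141592 : ℝ) < π := Real.pi_gt_d6
  have pi_lt : π < 3.141593 := Real.pi_lt_d6
  set s := Real.sin (2*π*θ) with hs
  set γ := Real.cos (2*π*θ) with hγ
  have habs : |2*π*θ| ≤ 2*π/5 := by
    rw [abs_mul, abs_of_nonneg (by positivity : (0:ℝ) ≤ 2*π)]
    calc 2*π*|θ| ≤ 2*π*(1/5) := by nlinarith
    _ = 2*π/5 := by ring
  have hsle : |s| ≤ 2*π*|θ| := by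
    calc |s| ≤ |2*π*θ| := Real.abs_sin_le_abs
    _ = 2*π*|θ| := by rw [abs_mul, abs_of_nonneg (by positivity : (0:ℝ) ≤ 2*π)]
  have hγ21 : (0.21 : ℝ) ≤ γ := by
    have h1 : 1 - (2*π*θ)^2/2 ≤ γ := Real.one_sub_sq_div_two_le_cos
    have h2 : (2*π*θ)^2 ≤ (2*π/5)^2 := by
      rw [← sq_abs (2*π*θ)]
      exact pow_le_pow_left₀ (abs_nonneg _) habs 2
    nlinarith
  have hpyth : s^2 + γ^2 = 1 := Real.sin_sq_add_cos_sq _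
  -- arcsin (sin (2πθ)) = 2πθ
  have harc : Real.arcsin s = 2*π*θ := by
    apply Real.arcsin_sin <;> [nlinarith [abs_le.mp habs]; nlinarith [abs_le.mp habs]]
  -- MVT on Icc (-|s|) |s|
  have hmvt : ‖Real.arcsin s - Real.arcsin (s*c)‖ ≤ 5 * ‖s - s*c‖ := by
    set S := Set.Icc (-|s|) (|s|) with hS
    have hmem : ∀ v ∈ S, 1 - v^2 ≥ γ^2 := by
      intro v hv
      obtain ⟨h1, h2⟩ := hv
      have hvs : |v| ≤ |s| := abs_le.mpr ⟨h1, h2⟩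
      have : v^2 ≤ s^2 := by rw [← sq_abs v, ← sq_abs s]; nlinarith [abs_nonneg v]
      nlinarith
    have hderiv : ∀ v ∈ S, HasDerivWithinAt Real.arcsin (1 / Real.sqrt (1 - v^2)) S v := by
      intro v hv
      have h := hmem v hv
      have hv1 : v ≠ 1 := by intro h'; rw [h'] at h; nlinarith
      have hv2 : v ≠ -1 := by intro h'; rw [h'] at h; nlinarith
      exact (Real.hasDerivAt_arcsin hv2 hv1).hasDerivWithinAt
    have hbound : ∀ v ∈ S, ‖1 / Real.sqrt (1 - v^2)‖ ≤ 5 := by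
      intro v hv
      have h := hmem v hv
      have hsq : Real.sqrt (1 - v^2) ≥ γ := by
        calc Real.sqrt (1 - v^2) ≥ Real.sqrt (γ^2) := Real.sqrt_le_sqrt (by linarith)
        _ = γ := Real.sqrt_sq (by linarith)
      rw [norm_div, norm_one, Real.norm_eq_abs, abs_of_nonneg (Real.sqrt_nonneg _)]
      rw [div_le_iff₀ (by nlinarith)]
      nlinarith
    have hconv : Convex ℝ S := convex_Icc _ _
    have h1 : s ∈ S := ⟨neg_abs_le s, le_abs_self s⟩
    have h2 : s*c ∈ S := by
      constructor
      · nlinarith [neg_abs_le s, le_abs_self s, abs_nonneg s]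
      · nlinarith [neg_abs_le s, le_abs_self s, abs_nonneg s]
    have := hconv.norm_image_sub_le_of_norm_hasDerivWithin_le hderiv hbound h2 h1
    simpa using this
  have key : θ - Real.arcsin (s*c) / (2*π) = (Real.arcsin s - Real.arcsin (s*c)) / (2*π) := by
    rw [harc]; field_simp
  rw [key, abs_div, abs_of_nonneg (by positivity : (0:ℝ) ≤ 2*π)]
  rw [div_le_iff₀ (by positivity)]
  have h5 : |Real.arcsin s - Real.arcsin (s*c)| ≤ 5 * (1-c) * |s| := by
    have : ‖s - s*c‖ = (1-c) * |s| := by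
      rw [Real.norm_eq_abs, show s - s*c = s*(1-c) by ring, abs_mul,
        abs_of_nonneg (by linarith : (0:ℝ) ≤ 1-c)]
      ring
    rw [Real.norm_eq_abs, this] at hmvt
    linarith [hmvt]
  calc |Real.arcsin s - Real.arcsin (s*c)| ≤ 5 * (1-c) * |s| := h5
  _ ≤ 5 * (1-c) * (2*π*|θ|) := by nlinarith [abs_nonneg s, abs_nonneg θ]
  _ = 5 * (1-c) * |θ| * (2*π) := by ring


section helpers
variable {E : Type*} [NormedAddCommGroup E] [NormedSpace ℝ E] {f g : E → ℝ} {x : E}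

lemma myAdd (hf : AnalyticAt ℝ f x) (hg : AnalyticAt ℝ g x) :
    AnalyticAt ℝ (fun z => f z + g z) x := hf.add hg

lemma mySub (hf : AnalyticAt ℝ f x) (hg : AnalyticAt ℝ g x) :
    AnalyticAt ℝ (fun z => f z - g z) x := hf.sub hg

lemma myNeg (hf : AnalyticAt ℝ f x) : AnalyticAt ℝ (fun z => -(f z)) x := hf.neg

end helpers

noncomputable def myδ (x : Fin 2 → ℝ) : ℝ :=
  Real.exp (-(32*(1 + (x 0)^2 + (x 1)^2)) - 2)

noncomputable def myΦ (x : Fin 2 → ℝ) (u : ℝ) : ℝ :=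
  u - Real.arcsin (Real.sin (2*Real.pi*u) * (1 - myδ x)) / (2*Real.pi)

noncomputable def myΥ (x : Fin 2 → ℝ) : ℝ :=
  ((myΦ x (x 0) + myΦ x (x 1))^2 + 3 * myΦ x (x 0) + myΦ x (x 1)) / 2

lemma myδ_pos (x : Fin 2 → ℝ) : 0 < myδ x := Real.exp_pos _

lemma myδ_bound (x : Fin 2 → ℝ) :
    myδ x * (35 + 32*((x 0)^2 + (x 1)^2)) ≤ 1 := by
  set s := (x 0)^2 + (x 1)^2 with hs
  have hs0 : 0 ≤ s := by positivity
  have h1 : myδ x = (Real.exp (34 + 32*s))⁻¹ := by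
    rw [myδ, ← Real.exp_neg]; congr 1; ring
  have h2 : 35 + 32*s ≤ Real.exp (34 + 32*s) := by
    have := Real.add_one_le_exp (34 + 32*s); linarith
  rw [h1]
  rw [inv_mul_le_iff₀ (Real.exp_pos _), mul_one]
  linarith

lemma myδ_le_one (x : Fin 2 → ℝ) : myδ x ≤ 1/35 := by
  have := myδ_bound x
  have h0 : (0:ℝ) ≤ (x 0)^2 + (x 1)^2 := by positivity
  nlinarith [myδ_pos x]

lemma myΦ_near (x : Fin 2 → ℝ) (u : ℝ) (k : ℕ) (h : |u - k| ≤ 1/5) :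
    |myΦ x u - k| ≤ 5 * myδ x * |u - k| := by
  have hδ0 := myδ_pos x
  have hδ1 := myδ_le_one x
  have hsin : Real.sin (2*Real.pi*u) = Real.sin (2*Real.pi*(u - k)) := by
    rw [show 2*Real.pi*u = 2*Real.pi*(u - k) + (k : ℤ) * (2*Real.pi) by push_cast; ring]
    exact Real.sin_add_int_mul_two_pi _ _
  have := psi_contract (θ := u - k) (c := 1 - myδ x) h (by linarith) (by linarith)
  have heq : myΦ x u - k =
      (u - k) - Real.arcsin (Real.sin (2*Real.pi*(u - k)) * (1 - myδ x)) / (2*Real.pi) := by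
    rw [myΦ, hsin]; ring
  rw [heq]
  calc |(u - k) - Real.arcsin (Real.sin (2*Real.pi*(u - k)) * (1 - myδ x)) / (2*Real.pi)|
      ≤ 5 * (1 - (1 - myδ x)) * |u - k| := this
    _ = 5 * myδ x * |u - k| := by ring

lemma myΥ_analytic (x : Fin 2 → ℝ) : AnalyticAt ℝ myΥ x := by
  have hproj : ∀ i : Fin 2, AnalyticAt ℝ (fun z : Fin 2 → ℝ => z i) x := fun i =>
    (ContinuousLinearMap.proj i : (Fin 2 → ℝ) →L[ℝ] ℝ).analyticAt x
  have hδ : AnalyticAt ℝ myδ x := by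
    unfold myδ
    apply AnalyticAt.rexp
    apply mySub _ analyticAt_const
    apply myNeg
    apply AnalyticAt.mul analyticAt_const
    apply myAdd (myAdd analyticAt_const ((hproj 0).pow 2)) ((hproj 1).pow 2)
  have hΦ : ∀ i : Fin 2, AnalyticAt ℝ (fun z => myΦ z (z i)) x := by
    intro i
    unfold myΦ
    apply mySub (hproj i)
    apply AnalyticAt.div _ analyticAt_const (by positivity : (2*Real.pi : ℝ) ≠ 0)
    have hsin : AnalyticAt ℝ (fun z : Fin 2 → ℝ => Real.sin (2*Real.pi*(z i))) x :=
      (my_analyticAt_sin _).comp (analyticAt_const.mul (hproj i))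
    have hin : AnalyticAt ℝ (fun z : Fin 2 → ℝ =>
        Real.sin (2*Real.pi*(z i)) * (1 - myδ z)) x :=
      hsin.mul (analyticAt_const.sub hδ)
    apply (my_analyticAt_arcsin ?_).comp hin
    have h1 := myδ_pos x
    have h2 := myδ_le_one x
    rw [abs_mul]
    have : |1 - myδ x| = 1 - myδ x := abs_of_nonneg (by linarith)
    rw [this]
    nlinarith [Real.abs_sin_le_one (2*Real.pi*(x i)), abs_nonneg (Real.sin (2*Real.pi*(x i)))]
  unfold myΥ
  apply AnalyticAt.div _ analyticAt_const (by norm_num : (2:ℝ) ≠ 0)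
  apply myAdd (myAdd ((myAdd (hΦ 0) (hΦ 1)).pow 2) (analyticAt_const.mul (hΦ 0))) (hΦ 1)

set_option maxHeartbeats 2000000 in
lemma stmt_8_aux :
    ∃ Υ : (Fin 2 → ℝ) → ℝ, (∀ x, AnalyticAt ℝ Υ x) ∧
      (∀ m : Fin 2 → ℕ, Υ (fun i => (m i : ℝ)) = I2 (fun i => (m i : ℝ))) ∧
      (∀ (x : Fin 2 → ℝ) (y : Fin 2 → ℕ),
        ‖x - fun i => (y i : ℝ)‖ ≤ 1 / 5 →
          |Υ x - I2 (fun i => (y i : ℝ))| ≤ ‖x - fun i => (y i : ℝ)‖ ∧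
          ‖x - fun i => (y i : ℝ)‖ ≤ 1 / 5) := by
  have hΦ0 : ∀ (x : Fin 2 → ℝ) (k : ℕ) (u : ℝ), u = k → myΦ x u = k := by
    intro x k u hk
    rw [myΦ, hk]
    have : Real.sin (2*Real.pi*(k:ℝ)) = 0 := by
      rw [show 2*Real.pi*(k:ℝ) = ((2*k : ℤ):ℝ)*Real.pi by push_cast; ring]
      exact Real.sin_int_mul_pi _
    rw [this, zero_mul, Real.arcsin_zero, zero_div, sub_zero]
  refine ⟨myΥ, myΥ_analytic, ?_, ?_⟩
  · intro m
    have e0 := hΦ0 (fun i => (m i:ℝ)) (m 0) ((fun i => (m i:ℝ)) 0) rfl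
    have e1 := hΦ0 (fun i => (m i:ℝ)) (m 1) ((fun i => (m i:ℝ)) 1) rfl
    rw [myΥ, I2, e0, e1]
  · intro x y hy
    refine ⟨?_, hy⟩
    set r := ‖x - fun i => (y i : ℝ)‖ with hr
    have hr0 : 0 ≤ r := norm_nonneg _
    have hri : ∀ i, |x i - y i| ≤ r := by
      intro i
      have := norm_le_pi_norm (x - fun i => (y i : ℝ)) i
      simpa using this
    have hδ0 := myδ_pos x
    have hδb := myδ_bound x
    have hδ1 := myδ_le_one x
    set u0 := myΦ x (x 0) with hu0
    set u1 := myΦ x (x 1) with hu1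
    set e := 5 * myδ x * r with he
    have he0 : 0 ≤ e := by positivity
    have h0 : |u0 - y 0| ≤ e := by
      calc |u0 - y 0| ≤ 5 * myδ x * |x 0 - y 0| :=
            myΦ_near x (x 0) (y 0) (le_trans (hri 0) hy)
        _ ≤ e := by rw [he]; nlinarith [hri 0, abs_nonneg (x 0 - (y 0:ℝ))]
    have h1 : |u1 - y 1| ≤ e := by
      calc |u1 - y 1| ≤ 5 * myδ x * |x 1 - y 1| :=
            myΦ_near x (x 1) (y 1) (le_trans (hri 1) hy)
        _ ≤ e := by rw [he]; nlinarith [hri 1, abs_nonneg (x 1 - (y 1:ℝ))]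
    have he1 : e ≤ 1 := by rw [he]; nlinarith
    have hY0 : (0:ℝ) ≤ y 0 := Nat.cast_nonneg _
    have hY1 : (0:ℝ) ≤ y 1 := Nat.cast_nonneg _
    -- the key smallness estimate
    have hyx0 : (y 0 : ℝ) ≤ x 0 + 1/5 := by have := abs_le.mp (le_trans (hri 0) hy); linarith [this.1]
    have hyx1 : (y 1 : ℝ) ≤ x 1 + 1/5 := by have := abs_le.mp (le_trans (hri 1) hy); linarith [this.1]
    have hkey : (2*((y 0:ℝ) + (y 1:ℝ)) + 4) * e ≤ r := by
      have hx0 : x 0 ≤ ((x 0)^2 + 1)/2 := by nlinarith [sq_nonneg (x 0 - 1)]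
      have hx1 : x 1 ≤ ((x 1)^2 + 1)/2 := by nlinarith [sq_nonneg (x 1 - 1)]
      have hsum : (10*((y 0:ℝ) + (y 1:ℝ)) + 20) * myδ x ≤ 1 := by
        have h34 : 10*((y 0:ℝ) + (y 1:ℝ)) + 20 ≤ 35 + 32*((x 0)^2 + (x 1)^2) := by
          nlinarith [sq_nonneg (x 0), sq_nonneg (x 1)]
        nlinarith
      rw [he]
      nlinarith
    -- final estimate
    have hd0 := abs_le.mp h0
    have hd1 := abs_le.mp h1
    have hΥ : myΥ x = ((u0 + u1)^2 + 3*u0 + u1)/2 := by rw [myΥ]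
    have hI : I2 (fun i => (y i : ℝ)) = (((y 0:ℝ) + (y 1:ℝ))^2 + 3*(y 0:ℝ) + (y 1:ℝ))/2 := by
      rw [I2]
    rw [hΥ, hI, abs_le]
    set Y0 := (y 0 : ℝ) with hY0e
    set Y1 := (y 1 : ℝ) with hY1e
    have q0 : 0 ≤ (e - (u0 - y 0)) * (e + (u0 - y 0)) :=
      mul_nonneg (by linarith [hd0.2]) (by linarith [hd0.1])
    have q1 : 0 ≤ (e - (u1 - y 1)) * (e + (u1 - y 1)) :=
      mul_nonneg (by linarith [hd1.2]) (by linarith [hd1.1])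
    have q2 : 0 ≤ (e - (u0 - y 0)) * (e - (u1 - y 1)) :=
      mul_nonneg (by linarith [hd0.2]) (by linarith [hd1.2])
    have q3 : 0 ≤ (e + (u0 - y 0)) * (e + (u1 - y 1)) :=
      mul_nonneg (by linarith [hd0.1]) (by linarith [hd1.1])
    have p1 : 0 ≤ ((y 0:ℝ) + (y 1:ℝ)) * (2*e - (u0 - y 0) - (u1 - y 1)) :=
      mul_nonneg (by linarith) (by linarith [hd0.2, hd1.2])
    have p2 : 0 ≤ ((y 0:ℝ) + (y 1:ℝ)) * (2*e + (u0 - y 0) + (u1 - y 1)) :=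
      mul_nonneg (by linarith) (by linarith [hd0.1, hd1.1])
    have p3 : 0 ≤ (1 - e) * e := mul_nonneg (by linarith) he0
    have hsq : (u0 - Y0 + (u1 - Y1))^2 ≤ 4*e := by nlinarith [q0, q1, q2, q3, p3]
    have hdiff : ((u0+u1)^2 + 3*u0 + u1)/2 - ((Y0+Y1)^2 + 3*Y0 + Y1)/2
        = ((u0 - Y0 + (u1 - Y1))^2 + 2*(Y0+Y1)*(u0 - Y0 + (u1 - Y1))
            + 3*(u0 - Y0) + (u1 - Y1))/2 := by ring
    constructor
    · linarith [sq_nonneg (u0 - Y0 + (u1 - Y1)), p2, hd0.1, hd1.1, hkey, hdiff.le, hdiff.ge]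
    · linarith [hsq, p1, hd0.2, hd1.2, hkey, hdiff.le, hdiff.ge]

theorem stmt_8 :
    ∃ Υ : (Fin 2 → ℝ) → ℝ, (∀ x, AnalyticAt ℝ Υ x) ∧
      (∀ m : Fin 2 → ℕ, Υ (fun i => (m i : ℝ)) = I2 (fun i => (m i : ℝ))) ∧
      (∀ (x : Fin 2 → ℝ) (y : Fin 2 → ℕ),
        ‖x - fun i => (y i : ℝ)‖ ≤ 1 / 5 →
          |Υ x - I2 (fun i => (y i : ℝ))| ≤ ‖x - fun i => (y i : ℝ)‖ ∧
          ‖x - fun i => (y i : ℝ)‖ ≤ 1 / 5) := stmt_8_aux
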